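/- Let C_• be a quasi-cyclic paracyclic k-module over a field k of characteristic zero, i.e. C_n = ker(id − T_n) ⊕ im(id − T_n) for all n, where T_n = t_n^{n+1}. Then the canonical projection of simplicial chain complexes (C_•, b_•) → (C_•^cyc, b_•), where C_•^cyc := C_• / im(id − T_•), is a quasi-isomorphism. -/

import Mathlib

/-!
A *paracyclic `k`-module* is a simplicial `k`-module `C_• = ⊕_{n∈ℕ} C_n` together with
operators `t_n : C_n → C_n` satisfying the paracyclic identities.  Here the face maps
`d_{n,i} : C_n → C_{n-1}` (for `n ≥ 1`, `0 ≤ i ≤ n`) are encoded as `d (n-1) i : C (n-1+1) →ₗ C (n-1)`,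
and similarly for the degeneracies; the index `i` ranges over `ℕ`, with the simplicial and
paracyclic identities imposed only in the meaningful range (values outside the range are junk).
-/
structure Paracyclic (k : Type) [Field k] where
  /-- the underlying graded `k`-module -/
  C : ℕ → Type
  [acg : ∀ n, AddCommGroup (C n)]
  [mod : ∀ n, Module k (C n)]
  /-- face maps: `d n i : C (n+1) →ₗ C n` encodes `d_{n+1,i}` for `0 ≤ i ≤ n+1` -/
  d : (n : ℕ) → ℕ → (C (n + 1) →ₗ[k] C n)
  /-- degeneracies: `s n i : C n →ₗ C (n+1)` encodes `s_{n,i}` for `0 ≤ i ≤ n` -/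
  s : (n : ℕ) → ℕ → (C n →ₗ[k] C (n + 1))
  /-- cyclic operators -/
  t : (n : ℕ) → (C n →ₗ[k] C n)
  -- simplicial identities:
  d_d : ∀ n i j, i ≤ j → j ≤ n + 1 →
    (d n i).comp (d (n + 1) (j + 1)) = (d n j).comp (d (n + 1) i)
  s_s : ∀ n i j, i ≤ j → j ≤ n →
    (s (n + 1) i).comp (s n j) = (s (n + 1) (j + 1)).comp (s n i)
  d_s_le : ∀ n i j, i ≤ j → j ≤ n →
    (d (n + 1) i).comp (s (n + 1) (j + 1)) = (s n j).comp (d n i)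
  d_s_self : ∀ n i, i ≤ n → (d n i).comp (s n i) = LinearMap.id
  d_s_succ : ∀ n i, i ≤ n → (d n (i + 1)).comp (s n i) = LinearMap.id
  d_s_gt : ∀ n i j, j ≤ i → i ≤ n →
    (d (n + 1) (i + 2)).comp (s (n + 1) j) = (s n j).comp (d n (i + 1))
  -- paracyclic identities:
  d_t : ∀ n i, i ≤ n → (d n (i + 1)).comp (t (n + 1)) = -((t n).comp (d n i))
  d_t_zero : ∀ n, (d n 0).comp (t (n + 1)) = ((-1 : k) ^ (n + 1)) • d n (n + 1)
  s_t : ∀ n i, i + 1 ≤ n → (s n (i + 1)).comp (t n) = -((t (n + 1)).comp (s n i))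
  s_t_zero : ∀ n, (s n 0).comp (t n) =
    ((-1 : k) ^ n) • ((t (n + 1)).comp ((t (n + 1)).comp (s n n)))

attribute [instance] Paracyclic.acg Paracyclic.mod

namespace Paracyclic

variable {k : Type} [Field k] (P : Paracyclic k)

/-- the simplicial boundary `b_{n+1} : C_{n+1} → C_n` -/
noncomputable def b (n : ℕ) : P.C (n + 1) →ₗ[k] P.C n :=
  ∑ i ∈ Finset.range (n + 2), ((-1 : k) ^ i) • P.d n i

/-- the acyclic boundary `b'_{n+1} : C_{n+1} → C_n` -/
noncomputable def b' (n : ℕ) : P.C (n + 1) →ₗ[k] P.C n :=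
  ∑ i ∈ Finset.range (n + 1), ((-1 : k) ^ i) • P.d n i

/-- the norm operator `N_n = Σ_{i=0}^n t_n^i` -/
noncomputable def Nrm (n : ℕ) : P.C n →ₗ[k] P.C n :=
  ∑ i ∈ Finset.range (n + 1), (P.t n) ^ i

/-- the extra degeneracy `s_n = (-1)^{n+1} t_{n+1} s_{n,n}` -/
noncomputable def sextra (n : ℕ) : P.C n →ₗ[k] P.C (n + 1) :=
  ((-1 : k) ^ (n + 1)) • ((P.t (n + 1)).comp (P.s n n))

/-- the Connes-Tsygan boundary `B_n = (id - t_{n+1}) s_n N_n` -/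
noncomputable def Bct (n : ℕ) : P.C n →ₗ[k] P.C (n + 1) :=
  (LinearMap.id - P.t (n + 1)).comp ((P.sextra n).comp (P.Nrm n))

/-- the operator `T_n = t_n^{n+1}` -/
noncomputable def T (n : ℕ) : P.C n →ₗ[k] P.C n := (P.t n) ^ (n + 1)

end Paracyclic

namespace Paracyclic

variable {k : Type} [Field k] (P : Paracyclic k)

/-- the associated cyclic module `C^cyc_n := C_n / im(id - T_n)` -/
noncomputable def Ccyc (n : ℕ) :=
  P.C n ⧸ LinearMap.range (LinearMap.id - P.T n)

noncomputable instance (n : ℕ) : AddCommGroup (P.Ccyc n) := by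
  unfold Ccyc; infer_instance

noncomputable instance (n : ℕ) : Module k (P.Ccyc n) := by
  unfold Ccyc; infer_instance

/-- the canonical projection `C_n → C^cyc_n` -/
noncomputable def proj (n : ℕ) : P.C n →ₗ[k] P.Ccyc n :=
  (LinearMap.range (LinearMap.id - P.T n)).mkQ

/-- A paracyclic module is *quasi-cyclic* if `C_n = ker(id - T_n) ⊕ im(id - T_n)` for all `n`. -/
def IsQuasiCyclic : Prop :=
  ∀ n : ℕ, IsCompl (LinearMap.ker (LinearMap.id - P.T n))
    (LinearMap.range (LinearMap.id - P.T n))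

end Paracyclic

/-
`T` commutes with `b`, and `h = s N` (extra degeneracy after the norm operator) is a chain
homotopy from `id − T` to `0`: this follows from `b s + s b' = id − t`, `N b = b' N` and
`(id − t) N = id − T`. Both `ker (id − T)` and `im (id − T)` are therefore subcomplexes, and
`im (id − T)` is acyclic: a cycle `(id − T) c` may be written with `c ∈ im (id − T)`, and then
`b c ∈ ker (id − T) ∩ im (id − T) = 0`, so `(id − T) c = b (h c)`. Quasi-cyclicity makes
`C = ker (id − T) ⊕ im (id − T)` a splitting of complexes, so dividing out the acyclic summand
`im (id − T)` does not change homology.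
-/

namespace LinearMap

variable {R M N L ι : Type*} [CommSemiring R] [AddCommMonoid M] [Module R M]
  [AddCommMonoid N] [Module R N] [AddCommMonoid L] [Module R L]

theorem finsetSum_comp (s : Finset ι) (f : ι → N →ₗ[R] L) (g : M →ₗ[R] N) :
    (∑ i ∈ s, f i) ∘ₗ g = ∑ i ∈ s, f i ∘ₗ g :=
  map_sum (lcomp R L g) f s

theorem comp_finsetSum (s : Finset ι) (f : ι → M →ₗ[R] N) (g : N →ₗ[R] L) :
    g ∘ₗ (∑ i ∈ s, f i) = ∑ i ∈ s, g ∘ₗ f i :=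
  map_sum (compRight R g) f s

end LinearMap

section Complements

variable {R M N : Type*} [Ring R] [AddCommGroup M] [Module R M] [AddCommGroup N] [Module R N]

open LinearMap Submodule

theorem LinearMap.ker_le_comap_ker_of_comp_eq {f : Module.End R M} {f' : Module.End R N}
    {g : M →ₗ[R] N} (h : g ∘ₗ f = f' ∘ₗ g) : ker f ≤ (ker f').comap g := fun x hx => by
  rw [mem_comap, mem_ker, ← comp_apply, ← h, comp_apply, mem_ker.mp hx, map_zero]

theorem LinearMap.range_le_comap_range_of_comp_eq {f : Module.End R M} {f' : Module.End R N}
    {g : M →ₗ[R] N} (h : g ∘ₗ f = f' ∘ₗ g) : range f ≤ (range f').comap g := by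
  rintro _ ⟨x, rfl⟩
  exact ⟨g x, by rw [← comp_apply, ← h, comp_apply]⟩

theorem LinearMap.exists_mem_range_apply_eq_of_isCompl {f : Module.End R M}
    (hf : IsCompl (ker f) (range f)) {x : M} (hx : x ∈ range f) : ∃ c ∈ range f, f c = x := by
  obtain ⟨c, rfl⟩ := hx
  refine ⟨(range f).projection (ker f) hf.symm c, projection_apply_mem _ _, ?_⟩
  rw [projection_eq_self_sub_projection hf, map_sub,
    mem_ker.mp (projection_apply_mem hf c), sub_zero]

theorem Submodule.apply_projection_of_le_comap {p q : Submodule R M} {p' q' : Submodule R N}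
    (hpq : IsCompl p q) (hpq' : IsCompl p' q') {g : M →ₗ[R] N} (hp : p ≤ p'.comap g)
    (hq : q ≤ q'.comap g) (x : M) :
    g (p.projection q hpq x) = p'.projection q' hpq' (g x) := by
  conv_rhs => rw [← projection_add_projection_eq_self hpq x]
  rw [map_add, map_add, projection_apply_of_mem_left hpq' (hp (projection_apply_mem hpq x)),
    projection_apply_of_mem_right hpq' (hq (projection_apply_mem hpq.symm x)), add_zero]

end Complements

section ChainComplex

open LinearMap Submodule

variable {R : Type*} [Ring R] {M : ℕ → Type*} [∀ n, AddCommGroup (M n)] [∀ n, Module R (M n)]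
  {d : ∀ n, M (n + 1) →ₗ[R] M n} {f : ∀ n, Module.End R (M n)} {h : ∀ n, M n →ₗ[R] M (n + 1)}

theorem exists_boundary_eq_of_mem_range_succ (hcomm : ∀ n, d n ∘ₗ f (n + 1) = f n ∘ₗ d n)
    (hcompl : ∀ n, IsCompl (ker (f n)) (range (f n)))
    (hsucc : ∀ n, d (n + 1) ∘ₗ h (n + 1) + h n ∘ₗ d n = f (n + 1))
    {n : ℕ} {x : M (n + 1)} (hx : x ∈ range (f (n + 1))) (hdx : d n x = 0) :
    ∃ w, d (n + 1) w = x := by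
  obtain ⟨c, hc, rfl⟩ := exists_mem_range_apply_eq_of_isCompl (hcompl (n + 1)) hx
  -- `d c` lies in both summands of `ker f ⊕ range f`
  have hdc : d n c = 0 := by
    refine disjoint_def.mp (hcompl n).disjoint _ ?_ (range_le_comap_range_of_comp_eq (hcomm n) hc)
    rw [mem_ker, ← comp_apply, ← hcomm, comp_apply, hdx]
  refine ⟨h (n + 1) c, ?_⟩
  rw [← hsucc, LinearMap.add_apply, comp_apply, comp_apply, hdc, map_zero, add_zero]

theorem boundary_projection_ker (hcomm : ∀ n, d n ∘ₗ f (n + 1) = f n ∘ₗ d n)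
    (hcompl : ∀ n, IsCompl (ker (f n)) (range (f n))) (n : ℕ) (x : M (n + 1)) :
    d n ((ker (f (n + 1))).projection _ (hcompl (n + 1)) x) =
      (ker (f n)).projection _ (hcompl n) (d n x) :=
  apply_projection_of_le_comap _ _ (ker_le_comap_ker_of_comp_eq (hcomm n))
    (range_le_comap_range_of_comp_eq (hcomm n)) x

theorem exists_boundary_eq_of_sub_boundary_mem_range
    (hcomm : ∀ n, d n ∘ₗ f (n + 1) = f n ∘ₗ d n)
    (hcompl : ∀ n, IsCompl (ker (f n)) (range (f n)))
    (hsucc : ∀ n, d (n + 1) ∘ₗ h (n + 1) + h n ∘ₗ d n = f (n + 1))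
    {n : ℕ} {z : M (n + 1)} (hz : d n z = 0) {u : M (n + 2)}
    (hzu : z - d (n + 1) u ∈ range (f (n + 1))) : ∃ w, d (n + 1) w = z := by
  set π := fun m => (ker (f m)).projection _ (hcompl m)
  have hπz : π (n + 1) z = d (n + 1) (π (n + 2) u) := by
    rw [boundary_projection_ker hcomm hcompl, ← sub_eq_zero, ← map_sub]
    exact (projection_apply_eq_zero_iff _).mpr hzu
  obtain ⟨v, hv⟩ : ∃ v, d (n + 1) v = z - π (n + 1) z := by
    refine exists_boundary_eq_of_mem_range_succ hcomm hcompl hsucc ?_ ?_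
    · rw [← projection_eq_self_sub_projection]
      exact projection_apply_mem _ _
    · rw [map_sub, boundary_projection_ker hcomm hcompl, hz, map_zero, sub_zero]
  exact ⟨π (n + 2) u + v, by rw [map_add, hv, ← hπz, add_sub_cancel]⟩

theorem exists_cycle_sub_mem_range_of_boundary_mem_range
    (hcomm : ∀ n, d n ∘ₗ f (n + 1) = f n ∘ₗ d n)
    (hcompl : ∀ n, IsCompl (ker (f n)) (range (f n)))
    {n : ℕ} {z : M (n + 1)} (hz : d n z ∈ range (f n)) :
    ∃ z', d n z' = 0 ∧ z - z' ∈ range (f (n + 1)) := by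
  refine ⟨(ker (f (n + 1))).projection _ (hcompl (n + 1)) z, ?_, ?_⟩
  · rw [boundary_projection_ker hcomm hcompl]
    exact (projection_apply_eq_zero_iff _).mpr hz
  · rw [← projection_eq_self_sub_projection]
    exact projection_apply_mem _ _

end ChainComplex

namespace Paracyclic

open Finset LinearMap

variable {k : Type} [Field k] (P : Paracyclic k)

/-- `δ_i = (-1)^i d_i`, in terms of which the paracyclic identities read `δ_{i+1} t = t δ_i` and
`δ_0 t = δ_{n+1}`. -/
noncomputable def signedFace (n i : ℕ) : P.C (n + 1) →ₗ[k] P.C n :=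
  ((-1 : k) ^ i) • P.d n i

theorem b_eq_sum_signedFace (n : ℕ) : P.b n = ∑ i ∈ range (n + 2), P.signedFace n i := rfl

theorem b'_eq_sum_signedFace (n : ℕ) : P.b' n = ∑ i ∈ range (n + 1), P.signedFace n i := rfl

theorem signedFace_succ_comp_t {n i : ℕ} (hi : i ≤ n) :
    P.signedFace n (i + 1) ∘ₗ P.t (n + 1) = P.t n ∘ₗ P.signedFace n i := by
  rw [signedFace, signedFace, smul_comp, P.d_t n i hi, comp_smul, pow_succ, mul_neg_one, neg_smul,
    smul_neg, neg_neg]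

theorem signedFace_zero_comp_t (n : ℕ) :
    P.signedFace n 0 ∘ₗ P.t (n + 1) = P.signedFace n (n + 1) := by
  simp [signedFace, P.d_t_zero]

theorem signedFace_add_comp_t_pow {n i j : ℕ} (h : i + j ≤ n + 1) :
    P.signedFace n (i + j) ∘ₗ (P.t (n + 1) ^ j) = (P.t n ^ j) ∘ₗ P.signedFace n i := by
  induction j generalizing i with
  | zero => rfl
  | succ j ih =>
    calc P.signedFace n (i + (j + 1)) ∘ₗ (P.t (n + 1) ^ (j + 1))
        = (P.signedFace n (i + 1 + j) ∘ₗ (P.t (n + 1) ^ j)) ∘ₗ P.t (n + 1) := by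
          rw [pow_succ, Module.End.mul_eq_comp, comp_assoc, add_right_comm, add_assoc]
      _ = (P.t n ^ j) ∘ₗ (P.signedFace n (i + 1) ∘ₗ P.t (n + 1)) := by
          rw [ih (by omega), comp_assoc]
      _ = (P.t n ^ (j + 1)) ∘ₗ P.signedFace n i := by
          rw [P.signedFace_succ_comp_t (by omega), ← comp_assoc, pow_succ, Module.End.mul_eq_comp]

/-- Past `t^i`, the face `δ_i` wraps around through `δ_0 t = δ_{n+1}`. -/
theorem signedFace_comp_t_pow_of_lt {n i m : ℕ} (hi : i ≤ n + 1) (hm : m ≤ n + 1) :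
    P.signedFace n i ∘ₗ (P.t (n + 1) ^ (i + 1 + m)) =
      (P.t n ^ (i + m)) ∘ₗ P.signedFace n (n + 1 - m) := by
  calc P.signedFace n i ∘ₗ (P.t (n + 1) ^ (i + 1 + m))
      = ((P.signedFace n (0 + i) ∘ₗ (P.t (n + 1) ^ i)) ∘ₗ P.t (n + 1)) ∘ₗ (P.t (n + 1) ^ m) := by
        rw [pow_add, pow_succ, zero_add]; rfl
    _ = (P.t n ^ i) ∘ₗ (P.signedFace n (n + 1 - m + m) ∘ₗ (P.t (n + 1) ^ m)) := by
        rw [P.signedFace_add_comp_t_pow (by omega), comp_assoc _ (P.signedFace n 0),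
          signedFace_zero_comp_t, Nat.sub_add_cancel hm, comp_assoc]
    _ = (P.t n ^ (i + m)) ∘ₗ P.signedFace n (n + 1 - m) := by
        rw [P.signedFace_add_comp_t_pow (by omega), ← comp_assoc, pow_add]; rfl

theorem signedFace_comp_T {n i : ℕ} (hi : i ≤ n + 1) :
    P.signedFace n i ∘ₗ P.T (n + 1) = P.T n ∘ₗ P.signedFace n i := by
  have h := P.signedFace_comp_t_pow_of_lt hi (Nat.sub_le (n + 1) i)
  rwa [show i + 1 + (n + 1 - i) = n + 1 + 1 by omega, show i + (n + 1 - i) = n + 1 by omega,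
    Nat.sub_sub_self hi] at h

theorem b_comp_T (n : ℕ) : P.b n ∘ₗ P.T (n + 1) = P.T n ∘ₗ P.b n := by
  rw [b_eq_sum_signedFace, finsetSum_comp, comp_finsetSum]
  exact sum_congr rfl fun i hi => P.signedFace_comp_T (by simp at hi; omega)

theorem b_comp_id_sub_T (n : ℕ) :
    P.b n ∘ₗ (LinearMap.id - P.T (n + 1)) = (LinearMap.id - P.T n) ∘ₗ P.b n := by
  rw [comp_sub, sub_comp, b_comp_T, comp_id, id_comp]

/-- The terms `δ_i t^j` of `b' N` are the terms `t^j δ_m` of `N b`, reindexed. -/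
theorem Nrm_comp_b (n : ℕ) : P.Nrm n ∘ₗ P.b n = P.b' n ∘ₗ P.Nrm (n + 1) := by
  simp only [Nrm, b_eq_sum_signedFace, b'_eq_sum_signedFace, finsetSum_comp]
  simp only [comp_finsetSum, ← sum_product']
  symm
  refine sum_nbij'
    (fun p => if p.2 ≤ p.1 then (p.2, p.1 - p.2) else (p.2 - 1, n + 2 + p.1 - p.2))
    (fun q => if q.1 + q.2 ≤ n then (q.1 + q.2, q.1) else (q.1 + q.2 - (n + 1), q.1 + 1))
    ?_ ?_ ?_ ?_ ?_
  rotate_right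
  · rintro ⟨i, j⟩ hij
    simp only [mem_product, Finset.mem_range] at hij
    dsimp only
    split_ifs with hji
    · obtain ⟨m, rfl⟩ := Nat.exists_eq_add_of_le hji
      rw [add_comm j m, Nat.add_sub_cancel, P.signedFace_add_comp_t_pow (by omega)]
    · obtain ⟨m, rfl⟩ := Nat.exists_eq_add_of_lt (not_le.mp hji)
      dsimp only
      rw [show i + m + 1 = i + 1 + m by omega, P.signedFace_comp_t_pow_of_lt (by omega) (by omega),
        show i + 1 + m - 1 = i + m by omega, show n + 2 + i - (i + 1 + m) = n + 1 - m by omega]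
  all_goals
    rintro ⟨a, b⟩ hab
    simp only [mem_product, Finset.mem_range] at hab
    dsimp only
    split_ifs <;>
      simp only [mem_product, Finset.mem_range, Prod.mk.injEq, and_true, true_and] at * <;> omega

theorem b_comp_t (n : ℕ) :
    P.b n ∘ₗ P.t (n + 1) = P.t n ∘ₗ P.b' n + P.signedFace n (n + 1) := by
  rw [b_eq_sum_signedFace, finsetSum_comp, sum_range_succ', signedFace_zero_comp_t,
    b'_eq_sum_signedFace, comp_finsetSum]
  congr 1
  exact sum_congr rfl fun i hi => P.signedFace_succ_comp_t (by simp at hi; omega)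

theorem signedFace_comp_s_of_le {n i : ℕ} (hi : i ≤ n) :
    P.signedFace (n + 1) i ∘ₗ P.s (n + 1) (n + 1) = P.s n n ∘ₗ P.signedFace n i := by
  rw [signedFace, signedFace, smul_comp, comp_smul, P.d_s_le n i n hi le_rfl]

theorem signedFace_comp_s_self (n : ℕ) :
    P.signedFace n n ∘ₗ P.s n n = (-1 : k) ^ n • LinearMap.id := by
  rw [signedFace, smul_comp, P.d_s_self n n le_rfl]

theorem signedFace_succ_comp_s_self (n : ℕ) :
    P.signedFace n (n + 1) ∘ₗ P.s n n = (-1 : k) ^ (n + 1) • LinearMap.id := by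
  rw [signedFace, smul_comp, P.d_s_succ n n le_rfl]

theorem b'_succ_comp_s (n : ℕ) :
    P.b' (n + 1) ∘ₗ P.s (n + 1) (n + 1) =
      P.s n n ∘ₗ P.b' n + (-1 : k) ^ (n + 1) • LinearMap.id := by
  rw [b'_eq_sum_signedFace, sum_range_succ, add_comp, finsetSum_comp, signedFace_comp_s_self,
    b'_eq_sum_signedFace, comp_finsetSum]
  congr 1
  exact sum_congr rfl fun i hi => P.signedFace_comp_s_of_le (by simp at hi; omega)

theorem b_comp_sextra_zero : P.b 0 ∘ₗ P.sextra 0 = LinearMap.id - P.t 0 := by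
  have hb' : P.b' 0 ∘ₗ P.s 0 0 = LinearMap.id := by
    rw [b'_eq_sum_signedFace, sum_range_one, signedFace_comp_s_self, pow_zero, one_smul]
  rw [sextra, comp_smul, ← comp_assoc, b_comp_t, add_comp, comp_assoc, hb',
    signedFace_succ_comp_s_self, comp_id]
  module

theorem b_comp_sextra_add_sextra_comp_b' (n : ℕ) :
    P.b (n + 1) ∘ₗ P.sextra (n + 1) + P.sextra n ∘ₗ P.b' n = LinearMap.id - P.t (n + 1) := by
  have hsign : ((-1 : k) ^ (n + 1)) * (-1) ^ (n + 1) = 1 := by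
    rw [← pow_add, Even.neg_one_pow ⟨n + 1, rfl⟩]
  rw [sextra, sextra, comp_smul, ← comp_assoc, b_comp_t, add_comp, comp_assoc, b'_succ_comp_s,
    signedFace_succ_comp_s_self, comp_add, comp_smul, comp_id, smul_comp, comp_assoc,
    pow_succ _ (n + 1)]
  linear_combination (norm := module) hsign • (LinearMap.id - P.t (n + 1))

theorem id_sub_t_comp_Nrm (n : ℕ) :
    (LinearMap.id - P.t n) ∘ₗ P.Nrm n = LinearMap.id - P.T n :=
  mul_neg_geom_sum (P.t n) (n + 1)

noncomputable def homotopy (n : ℕ) : P.C n →ₗ[k] P.C (n + 1) := P.sextra n ∘ₗ P.Nrm n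

theorem b_comp_homotopy_zero : P.b 0 ∘ₗ P.homotopy 0 = LinearMap.id - P.T 0 := by
  rw [homotopy, ← comp_assoc, b_comp_sextra_zero, id_sub_t_comp_Nrm]

theorem b_comp_homotopy_add_homotopy_comp_b (n : ℕ) :
    P.b (n + 1) ∘ₗ P.homotopy (n + 1) + P.homotopy n ∘ₗ P.b n = LinearMap.id - P.T (n + 1) := by
  rw [homotopy, homotopy, comp_assoc, Nrm_comp_b, ← comp_assoc, ← comp_assoc, ← add_comp,
    b_comp_sextra_add_sextra_comp_b', id_sub_t_comp_Nrm]

end Paracyclic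

theorem projection_to_cyclic_quotient_is_quasi_iso_general (k : Type) [Field k]
    (P : Paracyclic k) (hqc : P.IsQuasiCyclic)
    (bq : ∀ n : ℕ, P.Ccyc (n + 1) →ₗ[k] P.Ccyc n)
    (hbq : ∀ n : ℕ, (bq n).comp (P.proj (n + 1)) = (P.proj n).comp (P.b n)) :
    -- injectivity on homology:
    (∀ z : P.C 0, (∃ w : P.Ccyc 1, bq 0 w = P.proj 0 z) → ∃ w : P.C 1, P.b 0 w = z) ∧
    (∀ (n : ℕ) (z : P.C (n + 1)), P.b n z = 0 →
      (∃ w : P.Ccyc (n + 2), bq (n + 1) w = P.proj (n + 1) z) →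
        ∃ w : P.C (n + 2), P.b (n + 1) w = z) ∧
    -- surjectivity on homology:
    (∀ y : P.Ccyc 0, ∃ z : P.C 0, ∃ w : P.Ccyc 1, bq 0 w = P.proj 0 z - y) ∧
    (∀ (n : ℕ) (y : P.Ccyc (n + 1)), bq n y = 0 →
      ∃ z : P.C (n + 1), P.b n z = 0 ∧
        ∃ w : P.Ccyc (n + 2), bq (n + 1) w = P.proj (n + 1) z - y) := by
  have hproj (n : ℕ) (x : P.C n) : P.proj n x = 0 ↔ x ∈ LinearMap.range (LinearMap.id - P.T n) :=
    Submodule.Quotient.mk_eq_zero _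
  have hsurj (n : ℕ) : Function.Surjective (P.proj n) := Submodule.mkQ_surjective _
  have hbq' (n : ℕ) (u : P.C (n + 1)) : bq n (P.proj (n + 1) u) = P.proj n (P.b n u) :=
    LinearMap.congr_fun (hbq n) u
  refine ⟨?_, ?_, ?_, ?_⟩
  · rintro z ⟨w, hw⟩
    obtain ⟨u, rfl⟩ := hsurj 1 w
    have hzu := (hproj 0 (z - P.b 0 u)).mp (by rw [map_sub, ← hbq', hw, sub_self])
    rw [← P.b_comp_homotopy_zero] at hzu
    obtain ⟨v, hv⟩ := LinearMap.range_comp_le_range _ _ hzu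
    exact ⟨u + v, by rw [map_add, hv, add_sub_cancel]⟩
  · rintro n z hz ⟨w, hw⟩
    obtain ⟨u, rfl⟩ := hsurj (n + 2) w
    exact exists_boundary_eq_of_sub_boundary_mem_range P.b_comp_id_sub_T hqc
      P.b_comp_homotopy_add_homotopy_comp_b hz
      ((hproj _ (z - P.b (n + 1) u)).mp (by rw [map_sub, ← hbq', hw, sub_self]))
  · intro y
    obtain ⟨z, rfl⟩ := hsurj 0 y
    exact ⟨z, 0, by rw [map_zero, sub_self]⟩
  · intro n y hy
    obtain ⟨z, rfl⟩ := hsurj (n + 1) y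
    obtain ⟨z', hz', hzz'⟩ := exists_cycle_sub_mem_range_of_boundary_mem_range
      P.b_comp_id_sub_T hqc ((hproj n _).mp (by rw [← hbq', hy]))
    exact ⟨z', hz', 0, by rw [map_zero, eq_comm, sub_eq_zero, ← sub_eq_zero, ← map_sub,
      hproj, ← neg_mem_iff, neg_sub]; exact hzz'⟩

/-- Let `C_•` be a quasi-cyclic paracyclic `k`-module over a field `k` of
characteristic zero, i.e. `C_n = ker(id - T_n) ⊕ im(id - T_n)` for all `n`.  Then the canonical
projection of simplicial chain complexes `(C_•, b_•) → (C_•^cyc, b_•)`, where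
`C_•^cyc := C_• / im(id - T_•)`, is a quasi-isomorphism.

The boundary of the quotient complex is quantified as any family `bq` of linear maps compatible
with the projections (such a family exists and is unique, since the projections are surjective and
`b_•` preserves `im(id - T_•)`), and the quasi-isomorphism property is spelled out elementwise:
the maps induced on homology by the projection are injective and surjective in every degree. -/
theorem projection_to_cyclic_quotient_is_quasi_iso (k : Type) [Field k] [CharZero k]
    (P : Paracyclic k) (hqc : P.IsQuasiCyclic)
    (bq : ∀ n : ℕ, P.Ccyc (n + 1) →ₗ[k] P.Ccyc n)
    (hbq : ∀ n : ℕ, (bq n).comp (P.proj (n + 1)) = (P.proj n).comp (P.b n)) :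
    -- injectivity on homology:
    (∀ z : P.C 0, (∃ w : P.Ccyc 1, bq 0 w = P.proj 0 z) → ∃ w : P.C 1, P.b 0 w = z) ∧
    (∀ (n : ℕ) (z : P.C (n + 1)), P.b n z = 0 →
      (∃ w : P.Ccyc (n + 2), bq (n + 1) w = P.proj (n + 1) z) →
        ∃ w : P.C (n + 2), P.b (n + 1) w = z) ∧
    -- surjectivity on homology:
    (∀ y : P.Ccyc 0, ∃ z : P.C 0, ∃ w : P.Ccyc 1, bq 0 w = P.proj 0 z - y) ∧
    (∀ (n : ℕ) (y : P.Ccyc (n + 1)), bq n y = 0 →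
      ∃ z : P.C (n + 1), P.b n z = 0 ∧
        ∃ w : P.Ccyc (n + 2), bq (n + 1) w = P.proj (n + 1) z - y) :=
  projection_to_cyclic_quotient_is_quasi_iso_general k P hqc bq hbq
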